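/- Under the hypotheses of the norm-preserving nonlinear Schrödinger ODE dx_t/dt = [-iH₀ - (1/2)C*C + (1/2)η_t]x_t with η_t = ⟨x_t, C*C x_t⟩ and ‖x₀‖=1, the family of rank-one projectors ρ_t = P_{x_t} satisfies the matrix ODE dρ_t/dt = L(ρ_t) + Tr[J(ρ_t)]ρ_t − J(ρ_t), where L(ρ) = −i[H₀,ρ] − (1/2){C*C, ρ} + CρC* and J(ρ) = CρC*. -/

import Mathlib

/-!
Differentiating `ρ = x x*` along the ODE gives `ρ' = Aρ + ρA*` with
`A = -iH₀ - ½C*C + ½η`. Since `H₀` is self-adjoint and `η = ‖Cx‖² = Tr[CρC*]` is real, this is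
`-i[H₀,ρ] - ½{C*C,ρ} + Tr[J(ρ)]ρ`, i.e. `L(ρ) + Tr[J(ρ)]ρ - J(ρ)`.
-/

open Matrix

/-- The Lindblad generator `L(ρ) = -i[H₀,ρ] - (1/2){C*C,ρ} + CρC*`. -/
noncomputable def lindblad (H₀ C ρ : Matrix (Fin 2) (Fin 2) ℂ) : Matrix (Fin 2) (Fin 2) ℂ :=
  (-Complex.I) • (H₀ * ρ - ρ * H₀) - (1/2 : ℂ) • (Cᴴ * C * ρ + ρ * (Cᴴ * C)) + C * ρ * Cᴴ

/-- `J(ρ) = CρC*`. -/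
noncomputable def jmap (C ρ : Matrix (Fin 2) (Fin 2) ℂ) : Matrix (Fin 2) (Fin 2) ℂ := C * ρ * Cᴴ

section
variable {n : Type*} [Fintype n]

theorem HasDerivAt.vecMulVec_star_apply {x : ℝ → EuclideanSpace ℂ n} {v : EuclideanSpace ℂ n}
    {t : ℝ} (hx : HasDerivAt x v t) (i j : n) :
    HasDerivAt (fun s => vecMulVec (x s) (star (x s)) i j)
      ((vecMulVec v (star (x t)) + vecMulVec (x t) (star v)) i j) t := by
  have hcoord : ∀ k, HasDerivAt (fun s => x s k) (v k) t := fun k =>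
    ((EuclideanSpace.proj (𝕜 := ℂ) k).restrictScalars ℝ).hasFDerivAt.comp_hasDerivAt t hx
  simp only [vecMulVec_apply, Matrix.add_apply, Pi.star_apply]
  exact (hcoord i).mul (hcoord j).star

section StarRing
variable {R : Type*} [CommSemiring R] [StarRing R]

theorem vecMulVec_mulVec_star_add (A : Matrix n n R) (x : n → R) :
    vecMulVec (A *ᵥ x) (star x) + vecMulVec x (star (A *ᵥ x)) =
      A * vecMulVec x (star x) + vecMulVec x (star x) * Aᴴ := by
  rw [mul_vecMulVec, vecMulVec_mul, star_mulVec]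

theorem star_dotProduct_conjTranspose_mul_mulVec {m : Type*} [Fintype m] (C : Matrix m n R)
    (x : n → R) : star x ⬝ᵥ (Cᴴ * C) *ᵥ x = star (C *ᵥ x) ⬝ᵥ C *ᵥ x := by
  rw [← mulVec_mulVec, dotProduct_mulVec, star_mulVec]

theorem isSelfAdjoint_star_dotProduct_conjTranspose_mul_mulVec {m : Type*} [Fintype m]
    (C : Matrix m n R) (x : n → R) : IsSelfAdjoint (star x ⬝ᵥ (Cᴴ * C) *ᵥ x) := by
  rw [IsSelfAdjoint, star_dotProduct_conjTranspose_mul_mulVec, ← star_dotProduct]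

theorem trace_mul_vecMulVec_star_mul_conjTranspose {m : Type*} [Fintype m] (C : Matrix m n R)
    (x : n → R) : trace (C * vecMulVec x (star x) * Cᴴ) = star x ⬝ᵥ (Cᴴ * C) *ᵥ x := by
  rw [mul_vecMulVec, vecMulVec_mul, trace_vecMulVec, ← star_mulVec, dotProduct_comm,
    star_dotProduct_conjTranspose_mul_mulVec]

end StarRing

variable [DecidableEq n]

noncomputable def nlsGenerator (H₀ C : Matrix n n ℂ) (η : ℂ) : Matrix n n ℂ :=
  (-Complex.I) • H₀ - (1/2 : ℂ) • (Cᴴ * C) + ((1/2 : ℂ) * η) • 1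

theorem nlsGenerator_mul_add_mul_conjTranspose {H₀ : Matrix n n ℂ} (hH : H₀.IsHermitian)
    (C : Matrix n n ℂ) {η : ℂ} (hη : IsSelfAdjoint η) (ρ : Matrix n n ℂ) :
    nlsGenerator H₀ C η * ρ + ρ * (nlsGenerator H₀ C η)ᴴ =
      (-Complex.I) • (H₀ * ρ - ρ * H₀) - (1/2 : ℂ) • (Cᴴ * C * ρ + ρ * (Cᴴ * C)) + η • ρ := by
  simp only [nlsGenerator, conjTranspose_add, conjTranspose_sub, conjTranspose_smul,
    conjTranspose_mul, conjTranspose_conjTranspose, conjTranspose_one, hH.eq, star_mul',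
    hη.star_eq, add_mul, sub_mul, mul_add, mul_sub, smul_mul_assoc, mul_smul_comm, one_mul, mul_one]
  simp only [star_neg, Complex.star_def, Complex.conj_I, map_div₀, map_one, map_ofNat]
  module

end

theorem lindblad_add_trace_smul_sub_jmap_vecMulVec {H₀ : Matrix (Fin 2) (Fin 2) ℂ}
    (hH : H₀.IsHermitian) (C : Matrix (Fin 2) (Fin 2) ℂ) (x : Fin 2 → ℂ) :
    lindblad H₀ C (vecMulVec x (star x)) +
        (jmap C (vecMulVec x (star x))).trace • vecMulVec x (star x) -
        jmap C (vecMulVec x (star x)) =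
      vecMulVec (nlsGenerator H₀ C (star x ⬝ᵥ (Cᴴ * C) *ᵥ x) *ᵥ x) (star x) +
        vecMulVec x (star (nlsGenerator H₀ C (star x ⬝ᵥ (Cᴴ * C) *ᵥ x) *ᵥ x)) := by
  rw [vecMulVec_mulVec_star_add, nlsGenerator_mul_add_mul_conjTranspose hH C
    (isSelfAdjoint_star_dotProduct_conjTranspose_mul_mulVec C x), jmap,
    trace_mul_vecMulVec_star_mul_conjTranspose, lindblad]
  abel

theorem stmt_2_general (H₀ C : Matrix (Fin 2) (Fin 2) ℂ) (hH : H₀.IsHermitian)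
    (x : ℝ → EuclideanSpace ℂ (Fin 2))
    (η : ℝ → ℂ)
    (hη : ∀ t, η t = star (x t) ⬝ᵥ (Cᴴ * C).mulVec (x t))
    (hode : ∀ t ≥ (0:ℝ), HasDerivAt x
      ((WithLp.toLp 2 (((-Complex.I) • H₀ - (1/2 : ℂ) • (Cᴴ * C) + ((1/2 : ℂ) * η t) • (1 : Matrix (Fin 2) (Fin 2) ℂ)).mulVec
        (x t)) : EuclideanSpace ℂ (Fin 2))) t)
    (ρ : ℝ → Matrix (Fin 2) (Fin 2) ℂ)
    (hρ : ∀ t, ρ t = vecMulVec (x t) (star (x t))) :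
    ∀ t ≥ (0:ℝ), ∀ i j, HasDerivAt (fun s => ρ s i j)
      ((lindblad H₀ C (ρ t) + (jmap C (ρ t)).trace • ρ t - jmap C (ρ t)) i j) t := by
  intro t ht i j
  have hx : HasDerivAt x (WithLp.toLp 2 (nlsGenerator H₀ C (η t) *ᵥ x t)) t := hode t ht
  simp only [hρ, lindblad_add_trace_smul_sub_jmap_vecMulVec hH, ← hη]
  exact hx.vecMulVec_star_apply i j

/-- If `x_t` solves the norm-preserving nonlinear Schrödinger ODE, then the rank-one
projectors `ρ_t = P_{x_t}` solve `dρ_t/dt = L(ρ_t) + Tr[J(ρ_t)]ρ_t − J(ρ_t)`. -/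
theorem stmt_2 (H₀ C : Matrix (Fin 2) (Fin 2) ℂ) (hH : H₀.IsHermitian)
    (x : ℝ → EuclideanSpace ℂ (Fin 2))
    (η : ℝ → ℂ)
    (hη : ∀ t, η t = star (x t) ⬝ᵥ (Cᴴ * C).mulVec (x t))
    (hode : ∀ t ≥ (0:ℝ), HasDerivAt x
      ((WithLp.toLp 2 (((-Complex.I) • H₀ - (1/2 : ℂ) • (Cᴴ * C) + ((1/2 : ℂ) * η t) • (1 : Matrix (Fin 2) (Fin 2) ℂ)).mulVec
        (x t)) : EuclideanSpace ℂ (Fin 2))) t)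
    (hx0 : ‖x 0‖ = 1)
    (ρ : ℝ → Matrix (Fin 2) (Fin 2) ℂ)
    (hρ : ∀ t, ρ t = vecMulVec (x t) (star (x t))) :
    ∀ t ≥ (0:ℝ), ∀ i j, HasDerivAt (fun s => ρ s i j)
      ((lindblad H₀ C (ρ t) + (jmap C (ρ t)).trace • ρ t - jmap C (ρ t)) i j) t :=
  stmt_2_general H₀ C hH x η hη hode ρ hρ
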